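/- (Monotonicity of one iteration of Algorithm 1.) Suppose P_{l,k} > 0, β_{l,k}^l > 0, and 0 < ρ̂_{l,k} ≤ √P_{l,k}, 0 < ρ_{l,k} ≤ √P_{l,k} for all l and k ∈ A_l. Define, in order: u_{l,k} = u^opt_{l,k}(ρ̂, ρ); w_{l,k} = 1 + SINR_{l,k}(ρ̂, ρ); ρ̂⁺_{l,k} = min( √(M K) ρ_{l,k} u_{l,k} w_{l,k} β_{l,k}^l / η̂_{l,k}(u,w,ρ), √P_{l,k} ); and ρ⁺_{l,k} = min( √(M K) ρ̂⁺_{l,k} u_{l,k} w_{l,k} β_{l,k}^l / η_{l,k}(u,w,ρ̂⁺), √P_{l,k} ). Then all quantities are well defined (u_{l,k} > 0, w_{l,k} > 0, η̂_{l,k}(u,w,ρ) > 0, η_{l,k}(u,w,ρ̂⁺) > 0) and the sum spectral efficiency does not decrease: Σ_{l=1}^L Σ_{k∈A_l} ln(1 + SINR_{l,k}(ρ̂⁺, ρ⁺)) ≥ Σ_{l=1}^L Σ_{k∈A_l} ln(1 + SINR_{l,k}(ρ̂, ρ)). -/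

import Mathlib

open Finset Filter

noncomputable section

/-- `Pset A k` : the set of cells in which user index `k` is active,
i.e. `P_k = {i : k ∈ A_i}`. -/
def Pset {L K : ℕ} (A : Fin L → Finset (Fin K)) (k : Fin K) : Finset (Fin L) :=
  Finset.univ.filter fun i => k ∈ A i

/-- The SINR denominator `D_{l,k}` for pilot powers `phat` and data powers `p`. -/
def Dterm {L K : ℕ} (M : ℕ) (σ2 : ℝ) (A : Fin L → Finset (Fin K))
    (β : Fin L → Fin K → Fin L → ℝ) (phat p : Fin L → Fin K → ℝ)
    (l : Fin L) (k : Fin K) : ℝ :=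
  (M : ℝ) * (K : ℝ) * ∑ i ∈ (Pset A k).erase l, p i k * phat i k * β i k l ^ 2 +
    ((K : ℝ) * ∑ i ∈ Pset A k, phat i k * β i k l + σ2) *
      ((∑ i, ∑ t ∈ A i, p i t * β i t l) + σ2)

/-- `SINR_{l,k}` for pilot powers `phat` and data powers `p`. -/
def SINR {L K : ℕ} (M : ℕ) (σ2 : ℝ) (A : Fin L → Finset (Fin K))
    (β : Fin L → Fin K → Fin L → ℝ) (phat p : Fin L → Fin K → ℝ)
    (l : Fin L) (k : Fin K) : ℝ :=
  (M : ℝ) * (K : ℝ) * p l k * phat l k * β l k l ^ 2 / Dterm M σ2 A β phat p l k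

/-- `SINR_{l,k}(ρ̂, ρ)` : the SINR evaluated at squared square-root powers. -/
def SINRsq {L K : ℕ} (M : ℕ) (σ2 : ℝ) (A : Fin L → Finset (Fin K))
    (β : Fin L → Fin K → Fin L → ℝ) (rhat rho : Fin L → Fin K → ℝ)
    (l : Fin L) (k : Fin K) : ℝ :=
  SINR M σ2 A β (fun i t => rhat i t ^ 2) (fun i t => rho i t ^ 2) l k

/-- The mean square error `e_{l,k}(u, ρ̂, ρ)`. -/
def eMSE {L K : ℕ} (M : ℕ) (σ2 : ℝ) (A : Fin L → Finset (Fin K))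
    (β : Fin L → Fin K → Fin L → ℝ) (u : ℝ) (rhat rho : Fin L → Fin K → ℝ)
    (l : Fin L) (k : Fin K) : ℝ :=
  (M : ℝ) * (K : ℝ) * u ^ 2 * ∑ i ∈ Pset A k, rho i k ^ 2 * rhat i k ^ 2 * β i k l ^ 2
    - 2 * Real.sqrt ((M : ℝ) * (K : ℝ)) * rho l k * rhat l k * u * β l k l
    + u ^ 2 * ((K : ℝ) * ∑ i ∈ Pset A k, rhat i k ^ 2 * β i k l + σ2) *
        ((∑ i, ∑ t ∈ A i, rho i t ^ 2 * β i t l) + σ2)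
    + 1

/-- The leading (quadratic in `u`) coefficient `A_{l,k}(ρ̂, ρ)` of `e_{l,k}`. -/
def Acoef {L K : ℕ} (M : ℕ) (σ2 : ℝ) (A : Fin L → Finset (Fin K))
    (β : Fin L → Fin K → Fin L → ℝ) (rhat rho : Fin L → Fin K → ℝ)
    (l : Fin L) (k : Fin K) : ℝ :=
  (M : ℝ) * (K : ℝ) * ∑ i ∈ Pset A k, rho i k ^ 2 * rhat i k ^ 2 * β i k l ^ 2 +
    ((K : ℝ) * ∑ i ∈ Pset A k, rhat i k ^ 2 * β i k l + σ2) *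
      ((∑ i, ∑ t ∈ A i, rho i t ^ 2 * β i t l) + σ2)

/-- The optimal beamforming coefficient `u^opt_{l,k}(ρ̂, ρ)`. -/
def uopt {L K : ℕ} (M : ℕ) (σ2 : ℝ) (A : Fin L → Finset (Fin K))
    (β : Fin L → Fin K → Fin L → ℝ) (rhat rho : Fin L → Fin K → ℝ)
    (l : Fin L) (k : Fin K) : ℝ :=
  Real.sqrt ((M : ℝ) * (K : ℝ)) * rho l k * rhat l k * β l k l /
    Acoef M σ2 A β rhat rho l k

/-- The weighted-MMSE objective `F(u, w, ρ̂, ρ)`. -/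
def Fobj {L K : ℕ} (M : ℕ) (σ2 : ℝ) (A : Fin L → Finset (Fin K))
    (β : Fin L → Fin K → Fin L → ℝ) (u w rhat rho : Fin L → Fin K → ℝ) : ℝ :=
  ∑ l, ∑ k ∈ A l, (w l k * eMSE M σ2 A β (u l k) rhat rho l k - Real.log (w l k))

/-- The pilot-power quadratic coefficient `η̂_{l,k}(u, w, ρ)`. -/
def etaHat {L K : ℕ} (M : ℕ) (σ2 : ℝ) (A : Fin L → Finset (Fin K))
    (β : Fin L → Fin K → Fin L → ℝ) (u w rho : Fin L → Fin K → ℝ)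
    (l : Fin L) (k : Fin K) : ℝ :=
  rho l k ^ 2 * (M : ℝ) * (K : ℝ) * ∑ i ∈ Pset A k, w i k * u i k ^ 2 * β l k i ^ 2 +
    (K : ℝ) * ∑ j ∈ Pset A k, w j k * u j k ^ 2 * β l k j *
      ((∑ i, ∑ t ∈ A i, rho i t ^ 2 * β i t j) + σ2)

/-- The data-power quadratic coefficient `η_{l,k}(u, w, ρ̂)`. -/
def etaData {L K : ℕ} (M : ℕ) (σ2 : ℝ) (A : Fin L → Finset (Fin K))
    (β : Fin L → Fin K → Fin L → ℝ) (u w rhat : Fin L → Fin K → ℝ)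
    (l : Fin L) (k : Fin K) : ℝ :=
  rhat l k ^ 2 * (M : ℝ) * (K : ℝ) * ∑ i ∈ Pset A k, w i k * u i k ^ 2 * β l k i ^ 2 +
    ∑ i, ∑ t ∈ A i, w i t * u i t ^ 2 * β l k i *
      ((K : ℝ) * ∑ j ∈ Pset A t, rhat j t ^ 2 * β j t i + σ2)

/-! One round of Algorithm 1 is block-coordinate descent on the weighted-MMSE objective
`Fobj u w ρ̂ ρ = Σ (w e(u, ρ̂, ρ) - log w)`. Each `e_{l,k}` is a quadratic `A u² - 2 b u + 1` with
`A = D + b²`, so `min_{u,w} (w e - log w) = 1 - log (A / D) = 1 - log (1 + SINR)`, attained at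
`u = b / A = u^opt` and `w = A / D = 1 + SINR`. With `u, w` fixed, the objective is a separable
convex quadratic in the pilot powers `ρ̂` alone, and likewise in the data powers `ρ` alone, whose
minimiser subject to `ρ̂ ≤ √P` (resp. `ρ ≤ √P`) is the clipped vertex `min (b / η) √P`. Hence
`Σ (1 - log (1 + SINR⁺)) ≤ Fobj u w ρ̂⁺ ρ⁺ ≤ Fobj u w ρ̂⁺ ρ ≤ Fobj u w ρ̂ ρ = Σ (1 - log (1 + SINR))`. -/

lemma one_sub_log_div_le_mul_quadratic_sub_log {a b D u w : ℝ} (hD : 0 < D) (hw : 0 < w)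
    (ha : a = D + b ^ 2) :
    1 - Real.log (a / D) ≤ w * (a * u ^ 2 - 2 * b * u + 1) - Real.log w := by
  have ha_pos : 0 < a := by rw [ha]; positivity
  set e := a * u ^ 2 - 2 * b * u + 1
  -- `a e - D = (a u - b)²`
  have he : D / a ≤ e := by
    rw [div_le_iff₀ ha_pos]
    nlinarith [sq_nonneg (a * u - b)]
  have he_pos : 0 < e := (div_pos hD ha_pos).trans_le he
  have hlog_we : Real.log w + Real.log e ≤ w * e - 1 := by
    rw [← Real.log_mul hw.ne' he_pos.ne']
    exact Real.log_le_sub_one_of_pos (mul_pos hw he_pos)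
  have hlog_e : Real.log (D / a) ≤ Real.log e := Real.log_le_log (div_pos hD ha_pos) he
  rw [Real.log_div hD.ne' ha_pos.ne'] at hlog_e
  rw [Real.log_div ha_pos.ne' hD.ne']
  linarith

lemma div_mul_quadratic_at_div_eq_one {a b D : ℝ} (hD : 0 < D) (ha : a = D + b ^ 2) :
    a / D * (a * (b / a) ^ 2 - 2 * b * (b / a) + 1) = 1 := by
  have ha_pos : 0 < a := by rw [ha]; positivity
  field_simp
  linear_combination ha

lemma quadratic_min_div_le {a b c x : ℝ} (ha : 0 < a) (hx : x ≤ c) :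
    a * min (b / a) c ^ 2 - 2 * b * min (b / a) c ≤ a * x ^ 2 - 2 * b * x := by
  rcases le_total (b / a) c with h | h
  · rw [min_eq_left h]
    have hb : a * (b / a) = b := by field_simp
    nlinarith [sq_nonneg (x - b / a)]
  · rw [min_eq_right h]
    have hb : a * c ≤ b := by rwa [le_div_iff₀ ha, mul_comm] at h
    have hax : a * x ≤ a * c := mul_le_mul_of_nonneg_left hx ha.le
    nlinarith [mul_nonneg (sub_nonneg.2 hx) (by linarith : 0 ≤ 2 * b - a * (c + x))]

lemma mem_Pset {L K : ℕ} {A : Fin L → Finset (Fin K)} {i : Fin L} {k : Fin K} :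
    i ∈ Pset A k ↔ k ∈ A i := by
  simp [Pset]

section Reindexing

variable {L K : ℕ} (A : Fin L → Finset (Fin K))

lemma sum_sum_Pset_comm (G : Fin L → Fin K → Fin L → ℝ) :
    ∑ l, ∑ k ∈ A l, ∑ i ∈ Pset A k, G l k i = ∑ l, ∑ k ∈ A l, ∑ i ∈ Pset A k, G i k l := by
  have hswap : ∀ f : Fin L → Fin K → ℝ, ∑ l, ∑ k ∈ A l, f l k = ∑ k, ∑ l ∈ Pset A k, f l k :=
    fun f => Finset.sum_comm' fun l k => by simp [mem_Pset]
  rw [hswap, hswap]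
  exact Finset.sum_congr rfl fun k _ => Finset.sum_comm

lemma sum_active_sum_active_comm (F : Fin L → Fin K → Fin L → Fin K → ℝ) :
    ∑ l, ∑ k ∈ A l, ∑ i, ∑ t ∈ A i, F l k i t = ∑ l, ∑ k ∈ A l, ∑ i, ∑ t ∈ A i, F i t l k := by
  have hsigma : ∀ f : Fin L → Fin K → ℝ,
      ∑ l, ∑ k ∈ A l, f l k = ∑ x ∈ univ.sigma A, f x.1 x.2 :=
    fun f => (Finset.sum_sigma univ A fun x => f x.1 x.2).symm
  simp only [hsigma]
  exact Finset.sum_comm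

end Reindexing

section Model

variable {L K : ℕ} (M : ℕ) (σ2 : ℝ) (A : Fin L → Finset (Fin K))
  (β : Fin L → Fin K → Fin L → ℝ)

lemma eMSE_eq_quadratic (u : ℝ) (rhat rho : Fin L → Fin K → ℝ) (l : Fin L) (k : Fin K) :
    eMSE M σ2 A β u rhat rho l k = Acoef M σ2 A β rhat rho l k * u ^ 2
      - 2 * (Real.sqrt ((M : ℝ) * (K : ℝ)) * rho l k * rhat l k * β l k l) * u + 1 := by
  unfold eMSE Acoef
  ring

lemma Acoef_eq_Dterm_add_sq (rhat rho : Fin L → Fin K → ℝ) {l : Fin L} {k : Fin K}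
    (hl : k ∈ A l) :
    Acoef M σ2 A β rhat rho l k
      = Dterm M σ2 A β (fun i t => rhat i t ^ 2) (fun i t => rho i t ^ 2) l k
        + (Real.sqrt ((M : ℝ) * (K : ℝ)) * rho l k * rhat l k * β l k l) ^ 2 := by
  have hMK : Real.sqrt ((M : ℝ) * (K : ℝ)) ^ 2 = (M : ℝ) * (K : ℝ) :=
    Real.sq_sqrt (by positivity)
  unfold Acoef Dterm
  rw [← Finset.sum_erase_add _ _ (mem_Pset.mpr hl)]
  linear_combination (rho l k ^ 2 * rhat l k ^ 2 * β l k l ^ 2) * hMK.symm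

variable {σ2 β}

lemma Dterm_pos (hσ : 0 < σ2) (hβ : ∀ i t l, 0 ≤ β i t l) (phat p : Fin L → Fin K → ℝ)
    (hphat : ∀ i t, 0 ≤ phat i t) (hp : ∀ i t, 0 ≤ p i t) (l : Fin L) (k : Fin K) :
    0 < Dterm M σ2 A β phat p l k := by
  unfold Dterm
  have hcross : 0 ≤ ∑ i ∈ (Pset A k).erase l, p i k * phat i k * β i k l ^ 2 :=
    Finset.sum_nonneg fun i _ => by have := hp i k; have := hphat i k; positivity
  have hpilot : 0 ≤ ∑ i ∈ Pset A k, phat i k * β i k l :=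
    Finset.sum_nonneg fun i _ => mul_nonneg (hphat i k) (hβ i k l)
  have hdata : 0 ≤ ∑ i, ∑ t ∈ A i, p i t * β i t l :=
    Finset.sum_nonneg fun i _ => Finset.sum_nonneg fun t _ => mul_nonneg (hp i t) (hβ i t l)
  positivity

lemma Dterm_sq_pos (hσ : 0 < σ2) (hβ : ∀ i t l, 0 ≤ β i t l) (rhat rho : Fin L → Fin K → ℝ)
    (l : Fin L) (k : Fin K) :
    0 < Dterm M σ2 A β (fun i t => rhat i t ^ 2) (fun i t => rho i t ^ 2) l k :=
  Dterm_pos M A hσ hβ _ _ (fun i t => sq_nonneg (rhat i t)) (fun i t => sq_nonneg (rho i t)) l k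

lemma one_add_SINRsq_eq_Acoef_div (hσ : 0 < σ2) (hβ : ∀ i t l, 0 ≤ β i t l)
    (rhat rho : Fin L → Fin K → ℝ) {l : Fin L} {k : Fin K} (hl : k ∈ A l) :
    1 + SINRsq M σ2 A β rhat rho l k = Acoef M σ2 A β rhat rho l k
      / Dterm M σ2 A β (fun i t => rhat i t ^ 2) (fun i t => rho i t ^ 2) l k := by
  have hD := Dterm_sq_pos M A hσ hβ rhat rho l k
  rw [eq_div_iff hD.ne', add_mul, one_mul, SINRsq, SINR, div_mul_cancel₀ _ hD.ne',
    Acoef_eq_Dterm_add_sq M σ2 A β rhat rho hl, mul_pow, mul_pow, mul_pow,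
    Real.sq_sqrt (by positivity)]

lemma Acoef_pos (hσ : 0 < σ2) (hβ : ∀ i t l, 0 ≤ β i t l) (rhat rho : Fin L → Fin K → ℝ)
    {l : Fin L} {k : Fin K} (hl : k ∈ A l) : 0 < Acoef M σ2 A β rhat rho l k := by
  have hD := Dterm_sq_pos M A hσ hβ rhat rho l k
  rw [Acoef_eq_Dterm_add_sq M σ2 A β rhat rho hl]
  positivity

lemma one_add_SINRsq_pos (hσ : 0 < σ2) (hβ : ∀ i t l, 0 ≤ β i t l)
    (rhat rho : Fin L → Fin K → ℝ) {l : Fin L} {k : Fin K} (hl : k ∈ A l) :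
    0 < 1 + SINRsq M σ2 A β rhat rho l k := by
  rw [one_add_SINRsq_eq_Acoef_div M A hσ hβ rhat rho hl]
  exact div_pos (Acoef_pos M A hσ hβ rhat rho hl)
    (Dterm_sq_pos M A hσ hβ rhat rho l k)

lemma uopt_pos (hK : 0 < K) (hM : 0 < M) (hσ : 0 < σ2) (hβ : ∀ i t l, 0 ≤ β i t l)
    (rhat rho : Fin L → Fin K → ℝ) {l : Fin L} {k : Fin K} (hl : k ∈ A l)
    (hrhat : 0 < rhat l k) (hrho : 0 < rho l k) (hβl : 0 < β l k l) :
    0 < uopt M σ2 A β rhat rho l k := by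
  have := Acoef_pos M A hσ hβ rhat rho hl
  unfold uopt
  positivity

lemma sum_one_sub_log_le_Fobj (hσ : 0 < σ2) (hβ : ∀ i t l, 0 ≤ β i t l)
    (u w rhat rho : Fin L → Fin K → ℝ) (hw : ∀ l, ∀ k ∈ A l, 0 < w l k) :
    ∑ l, ∑ k ∈ A l, (1 - Real.log (1 + SINRsq M σ2 A β rhat rho l k))
      ≤ Fobj M σ2 A β u w rhat rho :=
  Finset.sum_le_sum fun l _ => Finset.sum_le_sum fun k hl => by
    rw [one_add_SINRsq_eq_Acoef_div M A hσ hβ rhat rho hl, eMSE_eq_quadratic]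
    exact one_sub_log_div_le_mul_quadratic_sub_log
      (Dterm_sq_pos M A hσ hβ rhat rho l k)
      (hw l k hl) (Acoef_eq_Dterm_add_sq M σ2 A β rhat rho hl)

lemma Fobj_uopt_one_add_SINRsq (hσ : 0 < σ2) (hβ : ∀ i t l, 0 ≤ β i t l)
    (rhat rho : Fin L → Fin K → ℝ) :
    Fobj M σ2 A β (uopt M σ2 A β rhat rho) (fun l k => 1 + SINRsq M σ2 A β rhat rho l k)
        rhat rho
      = ∑ l, ∑ k ∈ A l, (1 - Real.log (1 + SINRsq M σ2 A β rhat rho l k)) :=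
  Finset.sum_congr rfl fun l _ => Finset.sum_congr rfl fun k hl => by
    beta_reduce
    rw [one_add_SINRsq_eq_Acoef_div M A hσ hβ rhat rho hl, eMSE_eq_quadratic, uopt,
      div_mul_quadratic_at_div_eq_one
        (Dterm_sq_pos M A hσ hβ rhat rho l k)
        (Acoef_eq_Dterm_add_sq M σ2 A β rhat rho hl)]

end Model

section Quadratics

variable {L K : ℕ} (M : ℕ) (σ2 : ℝ) (A : Fin L → Finset (Fin K))
  (β : Fin L → Fin K → Fin L → ℝ)

lemma sum_mul_eMSE_eq_etaHat_quadratic (u w rho q : Fin L → Fin K → ℝ) :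
    ∑ l, ∑ k ∈ A l, w l k * eMSE M σ2 A β (u l k) q rho l k
      = ∑ l, ∑ k ∈ A l, (etaHat M σ2 A β u w rho l k * q l k ^ 2
          - 2 * (Real.sqrt ((M : ℝ) * (K : ℝ)) * rho l k * u l k * w l k * β l k l) * q l k)
        + ∑ l, ∑ k ∈ A l,
            w l k * (u l k ^ 2 * σ2 * ((∑ i, ∑ t ∈ A i, rho i t ^ 2 * β i t l) + σ2) + 1) := by
  set T : Fin L → ℝ := fun j => (∑ i, ∑ t ∈ A i, rho i t ^ 2 * β i t j) + σ2
  set G : Fin L → Fin K → Fin L → ℝ := fun l k i => w l k * u l k ^ 2 *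
    ((M : ℝ) * K * rho i k ^ 2 * β i k l ^ 2 + K * β i k l * T l) * q i k ^ 2
  have hlhs : ∀ l k, w l k * eMSE M σ2 A β (u l k) q rho l k = ∑ i ∈ Pset A k, G l k i
      + (-2 * (Real.sqrt ((M : ℝ) * (K : ℝ)) * rho l k * u l k * w l k * β l k l) * q l k
        + w l k * (u l k ^ 2 * σ2 * T l + 1)) := by
    intro l k
    have hG : ∑ i ∈ Pset A k, G l k i
        = w l k * u l k ^ 2 * M * K * ∑ i ∈ Pset A k, rho i k ^ 2 * q i k ^ 2 * β i k l ^ 2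
          + w l k * u l k ^ 2 * K * T l * ∑ i ∈ Pset A k, q i k ^ 2 * β i k l := by
      rw [Finset.mul_sum, Finset.mul_sum, ← Finset.sum_add_distrib]
      exact Finset.sum_congr rfl fun i _ => by ring
    rw [hG]
    unfold eMSE
    ring
  have hrhs : ∀ l k, etaHat M σ2 A β u w rho l k * q l k ^ 2
      - 2 * (Real.sqrt ((M : ℝ) * (K : ℝ)) * rho l k * u l k * w l k * β l k l) * q l k
      = ∑ i ∈ Pset A k, G i k l
        + -2 * (Real.sqrt ((M : ℝ) * (K : ℝ)) * rho l k * u l k * w l k * β l k l) * q l k := by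
    intro l k
    have hG : ∑ i ∈ Pset A k, G i k l
        = q l k ^ 2 * rho l k ^ 2 * M * K * ∑ i ∈ Pset A k, w i k * u i k ^ 2 * β l k i ^ 2
          + q l k ^ 2 * K * ∑ i ∈ Pset A k, w i k * u i k ^ 2 * β l k i * T i := by
      rw [Finset.mul_sum, Finset.mul_sum, ← Finset.sum_add_distrib]
      exact Finset.sum_congr rfl fun i _ => by ring
    rw [hG]
    unfold etaHat
    ring
  simp only [hlhs, hrhs, Finset.sum_add_distrib, sum_sum_Pset_comm A G]
  ring

lemma sum_mul_eMSE_eq_etaData_quadratic (u w rhat p : Fin L → Fin K → ℝ) :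
    ∑ l, ∑ k ∈ A l, w l k * eMSE M σ2 A β (u l k) rhat p l k
      = ∑ l, ∑ k ∈ A l, (etaData M σ2 A β u w rhat l k * p l k ^ 2
          - 2 * (Real.sqrt ((M : ℝ) * (K : ℝ)) * rhat l k * u l k * w l k * β l k l) * p l k)
        + ∑ l, ∑ k ∈ A l,
            w l k * (u l k ^ 2 * ((K : ℝ) * ∑ i ∈ Pset A k, rhat i k ^ 2 * β i k l + σ2) * σ2
              + 1) := by
  set B : Fin L → Fin K → ℝ := fun i t => (K : ℝ) * ∑ j ∈ Pset A t, rhat j t ^ 2 * β j t i + σ2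
  set G : Fin L → Fin K → Fin L → ℝ := fun l k i =>
    w l k * u l k ^ 2 * M * K * rhat i k ^ 2 * β i k l ^ 2 * p i k ^ 2
  set F : Fin L → Fin K → Fin L → Fin K → ℝ := fun l k i t =>
    w l k * u l k ^ 2 * B l k * β i t l * p i t ^ 2
  have hlhs : ∀ l k, w l k * eMSE M σ2 A β (u l k) rhat p l k
      = ∑ i ∈ Pset A k, G l k i + ∑ i, ∑ t ∈ A i, F l k i t
        + (-2 * (Real.sqrt ((M : ℝ) * (K : ℝ)) * rhat l k * u l k * w l k * β l k l) * p l k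
          + w l k * (u l k ^ 2 * B l k * σ2 + 1)) := by
    intro l k
    have hG : ∑ i ∈ Pset A k, G l k i
        = w l k * u l k ^ 2 * M * K * ∑ i ∈ Pset A k, p i k ^ 2 * rhat i k ^ 2 * β i k l ^ 2 :=
      by rw [Finset.mul_sum]; exact Finset.sum_congr rfl fun i _ => by ring
    have hF : ∑ i, ∑ t ∈ A i, F l k i t
        = w l k * u l k ^ 2 * B l k * ∑ i, ∑ t ∈ A i, p i t ^ 2 * β i t l := by
      simp only [Finset.mul_sum]
      exact Finset.sum_congr rfl fun i _ => Finset.sum_congr rfl fun t _ => by ring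
    rw [hG, hF]
    unfold eMSE
    ring
  have hrhs : ∀ l k, etaData M σ2 A β u w rhat l k * p l k ^ 2
      - 2 * (Real.sqrt ((M : ℝ) * (K : ℝ)) * rhat l k * u l k * w l k * β l k l) * p l k
      = ∑ i ∈ Pset A k, G i k l + ∑ i, ∑ t ∈ A i, F i t l k
        + -2 * (Real.sqrt ((M : ℝ) * (K : ℝ)) * rhat l k * u l k * w l k * β l k l) * p l k := by
    intro l k
    have hG : ∑ i ∈ Pset A k, G i k l
        = p l k ^ 2 * rhat l k ^ 2 * M * K * ∑ i ∈ Pset A k, w i k * u i k ^ 2 * β l k i ^ 2 :=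
      by rw [Finset.mul_sum]; exact Finset.sum_congr rfl fun i _ => by ring
    have hF : ∑ i, ∑ t ∈ A i, F i t l k
        = p l k ^ 2 * ∑ i, ∑ t ∈ A i, w i t * u i t ^ 2 * β l k i * B i t := by
      simp only [Finset.mul_sum]
      exact Finset.sum_congr rfl fun i _ => Finset.sum_congr rfl fun t _ => by ring
    rw [hG, hF]
    unfold etaData
    ring
  simp only [hlhs, hrhs, Finset.sum_add_distrib, sum_sum_Pset_comm A G,
    sum_active_sum_active_comm A F]
  ring

end Quadratics

section Updates

variable {L K : ℕ} (M : ℕ) {σ2 : ℝ} (A : Fin L → Finset (Fin K))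
  {β : Fin L → Fin K → Fin L → ℝ}

lemma Fobj_pilot_update_le (u w rho rhat c : Fin L → Fin K → ℝ)
    (hη : ∀ l, ∀ k ∈ A l, 0 < etaHat M σ2 A β u w rho l k)
    (hrhat : ∀ l, ∀ k ∈ A l, rhat l k ≤ c l k) :
    Fobj M σ2 A β u w (fun l k =>
        min (Real.sqrt ((M : ℝ) * (K : ℝ)) * rho l k * u l k * w l k * β l k l /
          etaHat M σ2 A β u w rho l k) (c l k)) rho
      ≤ Fobj M σ2 A β u w rhat rho := by
  simp only [Fobj, Finset.sum_sub_distrib]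
  rw [sum_mul_eMSE_eq_etaHat_quadratic, sum_mul_eMSE_eq_etaHat_quadratic]
  gcongr ?_ + _ - _
  exact Finset.sum_le_sum fun l _ => Finset.sum_le_sum fun k hk =>
    quadratic_min_div_le (hη l k hk) (hrhat l k hk)

lemma Fobj_data_update_le (u w rhat rho c : Fin L → Fin K → ℝ)
    (hη : ∀ l, ∀ k ∈ A l, 0 < etaData M σ2 A β u w rhat l k)
    (hrho : ∀ l, ∀ k ∈ A l, rho l k ≤ c l k) :
    Fobj M σ2 A β u w rhat (fun l k =>
        min (Real.sqrt ((M : ℝ) * (K : ℝ)) * rhat l k * u l k * w l k * β l k l /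
          etaData M σ2 A β u w rhat l k) (c l k))
      ≤ Fobj M σ2 A β u w rhat rho := by
  simp only [Fobj, Finset.sum_sub_distrib]
  rw [sum_mul_eMSE_eq_etaData_quadratic, sum_mul_eMSE_eq_etaData_quadratic]
  gcongr ?_ + _ - _
  exact Finset.sum_le_sum fun l _ => Finset.sum_le_sum fun k hk =>
    quadratic_min_div_le (hη l k hk) (hrho l k hk)

variable {M}

lemma etaHat_pos (hK : 0 < K) (hσ : 0 < σ2) (hβ : ∀ i t l, 0 ≤ β i t l)
    (u w rho : Fin L → Fin K → ℝ) (hw : ∀ i, ∀ t ∈ A i, 0 < w i t)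
    {l : Fin L} {k : Fin K} (hl : k ∈ A l) (hu : u l k ≠ 0) (hβl : 0 < β l k l) :
    0 < etaHat M σ2 A β u w rho l k := by
  have hT : ∀ j, 0 < (∑ i, ∑ t ∈ A i, rho i t ^ 2 * β i t j) + σ2 := fun j => by
    have : 0 ≤ ∑ i, ∑ t ∈ A i, rho i t ^ 2 * β i t j :=
      Finset.sum_nonneg fun i _ => Finset.sum_nonneg fun t _ => by have := hβ i t j; positivity
    positivity
  have hself : 0 ≤ ∑ i ∈ Pset A k, w i k * u i k ^ 2 * β l k i ^ 2 :=
    Finset.sum_nonneg fun i hi => by have := hw i k (mem_Pset.1 hi); positivity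
  have hcross : 0 < ∑ j ∈ Pset A k, w j k * u j k ^ 2 * β l k j *
      ((∑ i, ∑ t ∈ A i, rho i t ^ 2 * β i t j) + σ2) := by
    refine Finset.sum_pos' (fun j hj => ?_) ⟨l, mem_Pset.2 hl, ?_⟩
    · have := hw j k (mem_Pset.1 hj); have := hβ l k j; have := hT j; positivity
    · have := hw l k hl; have := hT l; positivity
  unfold etaHat
  positivity

lemma etaData_pos (hK : 0 < K) (hσ : 0 < σ2) (hβ : ∀ i t l, 0 ≤ β i t l)
    (u w rhat : Fin L → Fin K → ℝ) (hw : ∀ i, ∀ t ∈ A i, 0 < w i t)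
    {l : Fin L} {k : Fin K} (hl : k ∈ A l) (hu : u l k ≠ 0) (hβl : 0 < β l k l) :
    0 < etaData M σ2 A β u w rhat l k := by
  have hB : ∀ i t, 0 < (K : ℝ) * ∑ j ∈ Pset A t, rhat j t ^ 2 * β j t i + σ2 := fun i t => by
    have : 0 ≤ ∑ j ∈ Pset A t, rhat j t ^ 2 * β j t i :=
      Finset.sum_nonneg fun j _ => by have := hβ j t i; positivity
    positivity
  have hself : 0 ≤ ∑ i ∈ Pset A k, w i k * u i k ^ 2 * β l k i ^ 2 :=
    Finset.sum_nonneg fun i hi => by have := hw i k (mem_Pset.1 hi); positivity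
  have hterm : ∀ i, ∀ t ∈ A i,
      0 ≤ w i t * u i t ^ 2 * β l k i * ((K : ℝ) * ∑ j ∈ Pset A t, rhat j t ^ 2 * β j t i + σ2) :=
    fun i t ht => by have := hw i t ht; have := hβ l k i; have := hB i t; positivity
  have hcross : 0 < ∑ i, ∑ t ∈ A i, w i t * u i t ^ 2 * β l k i *
      ((K : ℝ) * ∑ j ∈ Pset A t, rhat j t ^ 2 * β j t i + σ2) := by
    refine Finset.sum_pos' (fun i _ => Finset.sum_nonneg (hterm i)) ⟨l, Finset.mem_univ l, ?_⟩
    refine Finset.sum_pos' (hterm l) ⟨k, hl, ?_⟩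
    have := hw l k hl; have := hB l k; positivity
  unfold etaData
  positivity

end Updates

theorem stmt15_general {L K : ℕ} (M : ℕ) (hK : 0 < K) (hM : 0 < M)
    (σ2 : ℝ) (hσ : 0 < σ2)
    (A : Fin L → Finset (Fin K))
    (β : Fin L → Fin K → Fin L → ℝ) (hβ : ∀ i t l, 0 ≤ β i t l)
    (Pm : Fin L → Fin K → ℝ)
    (hβpos : ∀ l, ∀ k ∈ A l, 0 < β l k l)
    (rhat rho : Fin L → Fin K → ℝ)
    (hrhat : ∀ l, ∀ k ∈ A l, 0 < rhat l k ∧ rhat l k ≤ Real.sqrt (Pm l k))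
    (hrho : ∀ l, ∀ k ∈ A l, 0 < rho l k ∧ rho l k ≤ Real.sqrt (Pm l k)) :
    let u : Fin L → Fin K → ℝ := fun l k => uopt M σ2 A β rhat rho l k
    let w : Fin L → Fin K → ℝ := fun l k => 1 + SINRsq M σ2 A β rhat rho l k
    let rhatPlus : Fin L → Fin K → ℝ := fun l k =>
      min (Real.sqrt ((M : ℝ) * (K : ℝ)) * rho l k * u l k * w l k * β l k l /
            etaHat M σ2 A β u w rho l k)
          (Real.sqrt (Pm l k))
    let rhoPlus : Fin L → Fin K → ℝ := fun l k =>
      min (Real.sqrt ((M : ℝ) * (K : ℝ)) * rhatPlus l k * u l k * w l k * β l k l /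
            etaData M σ2 A β u w rhatPlus l k)
          (Real.sqrt (Pm l k))
    (∀ l, ∀ k ∈ A l, 0 < u l k ∧ 0 < w l k ∧
      0 < etaHat M σ2 A β u w rho l k ∧ 0 < etaData M σ2 A β u w rhatPlus l k) ∧
    (∑ l, ∑ k ∈ A l, Real.log (1 + SINRsq M σ2 A β rhat rho l k)) ≤
      ∑ l, ∑ k ∈ A l, Real.log (1 + SINRsq M σ2 A β rhatPlus rhoPlus l k) := by
  intro u w rhatPlus rhoPlus
  have hu (l k) (hl : k ∈ A l) : 0 < u l k :=
    uopt_pos M A hK hM hσ hβ rhat rho hl (hrhat l k hl).1 (hrho l k hl).1 (hβpos l k hl)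
  have hw (l k) (hl : k ∈ A l) : 0 < w l k := one_add_SINRsq_pos M A hσ hβ rhat rho hl
  have hηhat (l k) (hl : k ∈ A l) : 0 < etaHat M σ2 A β u w rho l k :=
    etaHat_pos A hK hσ hβ u w rho hw hl (hu l k hl).ne' (hβpos l k hl)
  have hη (l k) (hl : k ∈ A l) : 0 < etaData M σ2 A β u w rhatPlus l k :=
    etaData_pos A hK hσ hβ u w rhatPlus hw hl (hu l k hl).ne' (hβpos l k hl)
  refine ⟨fun l k hl => ⟨hu l k hl, hw l k hl, hηhat l k hl, hη l k hl⟩, ?_⟩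
  have hold : Fobj M σ2 A β u w rhat rho
      = ∑ l, ∑ k ∈ A l, (1 - Real.log (1 + SINRsq M σ2 A β rhat rho l k)) :=
    Fobj_uopt_one_add_SINRsq M A hσ hβ rhat rho
  have hpilot : Fobj M σ2 A β u w rhatPlus rho ≤ Fobj M σ2 A β u w rhat rho :=
    Fobj_pilot_update_le M A u w rho rhat _ hηhat fun l k hl => (hrhat l k hl).2
  have hdata : Fobj M σ2 A β u w rhatPlus rhoPlus ≤ Fobj M σ2 A β u w rhatPlus rho :=
    Fobj_data_update_le M A u w rhatPlus rho _ hη fun l k hl => (hrho l k hl).2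
  have hnew := sum_one_sub_log_le_Fobj M A hσ hβ u w rhatPlus rhoPlus hw
  simp only [Finset.sum_sub_distrib] at hold hnew
  linarith

/-- monotonicity of one iteration of Algorithm 1: starting from
strictly positive feasible square-root powers, one full round of the updates
`u = u^opt(ρ̂,ρ)`, `w = 1 + SINR(ρ̂,ρ)`,
`ρ̂⁺_{l,k} = min(√(MK) ρ_{l,k} u_{l,k} w_{l,k} β_{l,k}^l / η̂_{l,k}(u,w,ρ), √P_{l,k})`,
`ρ⁺_{l,k} = min(√(MK) ρ̂⁺_{l,k} u_{l,k} w_{l,k} β_{l,k}^l / η_{l,k}(u,w,ρ̂⁺), √P_{l,k})`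
is well defined (`u, w, η̂, η > 0` on active pairs) and does not decrease the sum
spectral efficiency `Σ_l Σ_{k∈A_l} ln(1 + SINR_{l,k})`. -/
theorem stmt15 {L K : ℕ} (M : ℕ) (hL : 0 < L) (hK : 0 < K) (hM : 0 < M)
    (σ2 : ℝ) (hσ : 0 < σ2)
    (A : Fin L → Finset (Fin K))
    (β : Fin L → Fin K → Fin L → ℝ) (hβ : ∀ i t l, 0 ≤ β i t l)
    (Pm : Fin L → Fin K → ℝ) (hPm : ∀ l, ∀ k ∈ A l, 0 < Pm l k)
    (hβpos : ∀ l, ∀ k ∈ A l, 0 < β l k l)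
    (rhat rho : Fin L → Fin K → ℝ)
    (hrhat : ∀ l, ∀ k ∈ A l, 0 < rhat l k ∧ rhat l k ≤ Real.sqrt (Pm l k))
    (hrho : ∀ l, ∀ k ∈ A l, 0 < rho l k ∧ rho l k ≤ Real.sqrt (Pm l k)) :
    let u : Fin L → Fin K → ℝ := fun l k => uopt M σ2 A β rhat rho l k
    let w : Fin L → Fin K → ℝ := fun l k => 1 + SINRsq M σ2 A β rhat rho l k
    let rhatPlus : Fin L → Fin K → ℝ := fun l k =>
      min (Real.sqrt ((M : ℝ) * (K : ℝ)) * rho l k * u l k * w l k * β l k l /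
            etaHat M σ2 A β u w rho l k)
          (Real.sqrt (Pm l k))
    let rhoPlus : Fin L → Fin K → ℝ := fun l k =>
      min (Real.sqrt ((M : ℝ) * (K : ℝ)) * rhatPlus l k * u l k * w l k * β l k l /
            etaData M σ2 A β u w rhatPlus l k)
          (Real.sqrt (Pm l k))
    (∀ l, ∀ k ∈ A l, 0 < u l k ∧ 0 < w l k ∧
      0 < etaHat M σ2 A β u w rho l k ∧ 0 < etaData M σ2 A β u w rhatPlus l k) ∧
    (∑ l, ∑ k ∈ A l, Real.log (1 + SINRsq M σ2 A β rhat rho l k)) ≤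
      ∑ l, ∑ k ∈ A l, Real.log (1 + SINRsq M σ2 A β rhatPlus rhoPlus l k) :=
  stmt15_general M hK hM σ2 hσ A β hβ Pm hβpos rhat rho hrhat hrho
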